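/- Let a, b be natural numbers and f : ℝ × ℝ → ℂ a smooth function (ContDiff ℝ ⊤) such that for all x, y ∈ ℝ, iteratedDeriv a (fun s => iteratedDeriv b (fun t => f (s, t)) y) x = 0. Then there exist smooth functions g : Fin a → (ℝ → ℂ) and h : Fin b → (ℝ → ℂ) such that for all x, y ∈ ℝ, f (x, y) = (∑ j : Fin a, g j y · x^(j : ℕ)) + (∑ j : Fin b, h j x · y^(j : ℕ)). -/

import Mathlib

open MeasureTheory Filter Topology

lemma deriv_smooth {u : ℝ → ℂ} (hu : ContDiff ℝ (⊤ : ℕ∞) u) : ContDiff ℝ (⊤ : ℕ∞) (deriv u) := by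
  have : ContDiff ℝ (((⊤ : ℕ∞) : WithTop ℕ∞) + 1) u := by
    rw [show (((⊤ : ℕ∞) : WithTop ℕ∞) + 1) = ((⊤ : ℕ∞) : WithTop ℕ∞) from rfl]; exact hu
  exact (contDiff_succ_iff_deriv.mp this).2.2

lemma itd_add {n : ℕ} {u v : ℝ → ℂ} (hu : ContDiff ℝ (⊤ : ℕ∞) u) (hv : ContDiff ℝ (⊤ : ℕ∞) v) (x : ℝ) :
    iteratedDeriv n (fun t => u t + v t) x = iteratedDeriv n u x + iteratedDeriv n v x := by
  have := iteratedDerivWithin_add (n := n) (Set.mem_univ x) uniqueDiffOn_univ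
    (hu.of_le (by exact_mod_cast le_top)).contDiffWithinAt (hv.of_le (by exact_mod_cast le_top)).contDiffWithinAt
  simpa [iteratedDerivWithin_univ, Pi.add_def, Pi.sub_def] using this

lemma itd_cmul {n : ℕ} {u : ℝ → ℂ} (hu : ContDiff ℝ (⊤ : ℕ∞) u) (c : ℂ) (x : ℝ) :
    iteratedDeriv n (fun t => c * u t) x = c * iteratedDeriv n u x := by
  have := iteratedDerivWithin_const_smul (n := n) (Set.mem_univ x) uniqueDiffOn_univ c
    (hu.of_le (by exact_mod_cast le_top)).contDiffWithinAt
  simpa [iteratedDerivWithin_univ, smul_eq_mul] using this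

lemma itd_sub {n : ℕ} {u v : ℝ → ℂ} (hu : ContDiff ℝ (⊤ : ℕ∞) u) (hv : ContDiff ℝ (⊤ : ℕ∞) v) (x : ℝ) :
    iteratedDeriv n (fun t => u t - v t) x = iteratedDeriv n u x - iteratedDeriv n v x := by
  have := iteratedDerivWithin_sub (n := n) (Set.mem_univ x) uniqueDiffOn_univ
    (hu.of_le (by exact_mod_cast le_top)).contDiffWithinAt (hv.of_le (by exact_mod_cast le_top)).contDiffWithinAt
  simpa [iteratedDerivWithin_univ, Pi.add_def, Pi.sub_def] using this

lemma itd_zero (n : ℕ) (x : ℝ) : iteratedDeriv n (fun _ : ℝ => (0:ℂ)) x = 0 := by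
  induction n generalizing x with
  | zero => simp
  | succ n ih =>
      rw [iteratedDeriv_succ']
      simp only [deriv_const']
      exact ih x

lemma itd_sum {n : ℕ} {ι : Type*} (s : Finset ι) (φ : ι → ℝ → ℂ)
    (hφ : ∀ i ∈ s, ContDiff ℝ (⊤ : ℕ∞) (φ i)) (x : ℝ) :
    iteratedDeriv n (fun t => ∑ i ∈ s, φ i t) x = ∑ i ∈ s, iteratedDeriv n (φ i) x := by
  classical
  induction s using Finset.induction with
  | empty => simp [itd_zero]
  | @insert a s ha ih =>
      have h1 : ContDiff ℝ (⊤ : ℕ∞) (φ a) := hφ a (Finset.mem_insert_self a s)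
      have h2 : ContDiff ℝ (⊤ : ℕ∞) (fun t => ∑ i ∈ s, φ i t) :=
        ContDiff.sum fun i hi => hφ i (Finset.mem_insert_of_mem hi)
      simp only [Finset.sum_insert ha]
      rw [itd_add h1 h2, ih (fun i hi => hφ i (Finset.mem_insert_of_mem hi))]

lemma poly_of_itd_zero : ∀ (n : ℕ) (u : ℝ → ℂ), ContDiff ℝ (⊤ : ℕ∞) u →
    (∀ x, iteratedDeriv n u x = 0) →
    ∀ x : ℝ, u x = ∑ j ∈ Finset.range n, (iteratedDeriv j u 0 / (j.factorial : ℂ)) * (x:ℂ) ^ j := by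
  intro n
  induction n with
  | zero => intro u hu h0 x; simpa using h0 x
  | succ n ih =>
    intro u hu h0 x
    have hv : ContDiff ℝ (⊤ : ℕ∞) (deriv u) := deriv_smooth hu
    have h0' : ∀ x, iteratedDeriv n (deriv u) x = 0 := by
      intro x; rw [← iteratedDeriv_succ']; exact h0 x
    have key := ih (deriv u) hv h0'
    set c : ℕ → ℂ := fun j => iteratedDeriv j (deriv u) 0 / (j.factorial : ℂ) with hc
    set P : ℝ → ℂ := fun x => ∑ j ∈ Finset.range n, (c j / (j + 1 : ℂ)) * (x:ℂ) ^ (j+1) with hP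
    have hPd : ∀ y : ℝ, HasDerivAt P (deriv u y) y := by
      intro y
      have : HasDerivAt P (∑ j ∈ Finset.range n, c j * (y:ℂ) ^ j) y := by
        refine HasDerivAt.fun_sum fun j _ => ?_
        have h1 : HasDerivAt (fun z : ℂ => (c j / (j+1:ℂ)) * z ^ (j+1))
            ((c j / (j+1:ℂ)) * ((j+1 : ℕ) * (y:ℂ) ^ j)) (y:ℂ) := by
          simpa using ((hasDerivAt_pow (j+1) (y:ℂ)).const_mul (c j / (j+1:ℂ)))
        have h2 := h1.comp_ofReal
        have : (c j / (j+1:ℂ)) * ((j+1 : ℕ) * (y:ℂ) ^ j) = c j * (y:ℂ) ^ j := by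
          have hj : ((j:ℂ)+1) ≠ 0 := Nat.cast_add_one_ne_zero j
          field_simp
          push_cast; ring
        rw [this] at h2
        exact h2
      rwa [key y] 
    have hconst : ∀ y : ℝ, u y - P y = u 0 - P 0 := by
      have hdiff : Differentiable ℝ (fun y : ℝ => u y - P y) :=
        fun y => ((hu.differentiable (by simp) y).sub (hPd y).differentiableAt)
      have hz : ∀ y, deriv (fun y : ℝ => u y - P y) y = 0 := by
        intro y
        have := ((hu.differentiable (by simp) y).hasDerivAt.sub (hPd y))
        simp only [sub_self] at this
        exact this.deriv
      intro y
      exact is_const_of_deriv_eq_zero hdiff hz y 0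
    have hux : u x = u 0 + P x := by
      have := hconst x
      have hP0 : P 0 = 0 := by simp [hP]
      rw [hP0] at this
      linear_combination this
    rw [hux, Finset.sum_range_succ']
    rw [add_comm (u 0) (P x)]
    congr 1
    · rw [hP]
      refine Finset.sum_congr rfl fun j _ => ?_
      rw [iteratedDeriv_succ', hc]
      have hfac : (((j+1).factorial : ℕ) : ℂ) = ((j:ℂ)+1) * (j.factorial : ℂ) := by
        push_cast [Nat.factorial_succ]; ring
      rw [hfac]
      simp only [hc]
      rw [div_div, mul_comm ((j.factorial : ℕ) : ℂ) ((j:ℂ)+1)]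
    · simp

noncomputable def D1 (F : ℝ × ℝ → ℂ) : ℝ × ℝ → ℂ := fun p => deriv (fun s => F (s, p.2)) p.1
noncomputable def D2 (F : ℝ × ℝ → ℂ) : ℝ × ℝ → ℂ := fun p => deriv (fun t => F (p.1, t)) p.2

lemma hasDerivAt_D1 {F : ℝ × ℝ → ℂ} (hF : ContDiff ℝ (⊤ : ℕ∞) F) (p : ℝ × ℝ) :
    HasDerivAt (fun s => F (s, p.2)) (fderiv ℝ F p ((1:ℝ), (0:ℝ))) p.1 := by
  have hd : HasFDerivAt F (fderiv ℝ F p) ((fun s : ℝ => (s, p.2)) p.1) := by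
    simpa using (hF.differentiable (by simp) p).hasFDerivAt
  have hc : HasDerivAt (fun s : ℝ => (s, p.2)) ((1:ℝ), (0:ℝ)) p.1 :=
    (hasDerivAt_id p.1).prodMk (hasDerivAt_const p.1 p.2)
  exact hd.comp_hasDerivAt p.1 hc

lemma D1_eq {F : ℝ × ℝ → ℂ} (hF : ContDiff ℝ (⊤ : ℕ∞) F) :
    D1 F = fun p => fderiv ℝ F p ((1:ℝ), (0:ℝ)) := by
  funext p
  exact (hasDerivAt_D1 hF p).deriv

lemma hasDerivAt_D2 {F : ℝ × ℝ → ℂ} (hF : ContDiff ℝ (⊤ : ℕ∞) F) (p : ℝ × ℝ) :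
    HasDerivAt (fun t => F (p.1, t)) (fderiv ℝ F p ((0:ℝ), (1:ℝ))) p.2 := by
  have hd : HasFDerivAt F (fderiv ℝ F p) ((fun t : ℝ => (p.1, t)) p.2) := by
    simpa using (hF.differentiable (by simp) p).hasFDerivAt
  have hc : HasDerivAt (fun t : ℝ => (p.1, t)) ((0:ℝ), (1:ℝ)) p.2 :=
    (hasDerivAt_const p.2 p.1).prodMk (hasDerivAt_id p.2)
  exact hd.comp_hasDerivAt p.2 hc

lemma D2_eq {F : ℝ × ℝ → ℂ} (hF : ContDiff ℝ (⊤ : ℕ∞) F) :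
    D2 F = fun p => fderiv ℝ F p ((0:ℝ), (1:ℝ)) := by
  funext p
  exact (hasDerivAt_D2 hF p).deriv

lemma fderiv_apply_smooth {F : ℝ × ℝ → ℂ} (hF : ContDiff ℝ (⊤ : ℕ∞) F) (v : ℝ × ℝ) :
    ContDiff ℝ (⊤ : ℕ∞) (fun p => fderiv ℝ F p v) :=
  (hF.fderiv_right (by simp)).clm_apply contDiff_const

lemma D1_smooth {F : ℝ × ℝ → ℂ} (hF : ContDiff ℝ (⊤ : ℕ∞) F) : ContDiff ℝ (⊤ : ℕ∞) (D1 F) := by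
  rw [D1_eq hF]; exact fderiv_apply_smooth hF _

lemma D2_smooth {F : ℝ × ℝ → ℂ} (hF : ContDiff ℝ (⊤ : ℕ∞) F) : ContDiff ℝ (⊤ : ℕ∞) (D2 F) := by
  rw [D2_eq hF]; exact fderiv_apply_smooth hF _

lemma hasDerivAt_fderiv_line {F : ℝ × ℝ → ℂ} (hF : ContDiff ℝ (⊤ : ℕ∞) F) (p : ℝ × ℝ)
    (v : ℝ × ℝ) :
    HasDerivAt (fun s : ℝ => fderiv ℝ F (s, p.2) v)
      ((fderiv ℝ (fderiv ℝ F) p ((1:ℝ),(0:ℝ))) v) p.1 := by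
  have h' : ContDiff ℝ (⊤ : ℕ∞) (fderiv ℝ F) := hF.fderiv_right (by simp)
  have hd : HasFDerivAt (fderiv ℝ F) (fderiv ℝ (fderiv ℝ F) p) ((fun s : ℝ => (s, p.2)) p.1) := by
    simpa using (h'.differentiable (by simp) p).hasFDerivAt
  have hc : HasDerivAt (fun s : ℝ => (s, p.2)) ((1:ℝ), (0:ℝ)) p.1 :=
    (hasDerivAt_id p.1).prodMk (hasDerivAt_const p.1 p.2)
  have h1 : HasDerivAt (fun s : ℝ => fderiv ℝ F (s, p.2))
      (fderiv ℝ (fderiv ℝ F) p ((1:ℝ),(0:ℝ))) p.1 := hd.comp_hasDerivAt p.1 hc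
  have := (ContinuousLinearMap.apply ℝ ℂ v).hasFDerivAt.comp_hasDerivAt p.1 h1
  simpa [Function.comp_def] using this

lemma hasDerivAt_fderiv_line2 {F : ℝ × ℝ → ℂ} (hF : ContDiff ℝ (⊤ : ℕ∞) F) (p : ℝ × ℝ)
    (v : ℝ × ℝ) :
    HasDerivAt (fun t : ℝ => fderiv ℝ F (p.1, t) v)
      ((fderiv ℝ (fderiv ℝ F) p ((0:ℝ),(1:ℝ))) v) p.2 := by
  have h' : ContDiff ℝ (⊤ : ℕ∞) (fderiv ℝ F) := hF.fderiv_right (by simp)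
  have hd : HasFDerivAt (fderiv ℝ F) (fderiv ℝ (fderiv ℝ F) p) ((fun t : ℝ => (p.1, t)) p.2) := by
    simpa using (h'.differentiable (by simp) p).hasFDerivAt
  have hc : HasDerivAt (fun t : ℝ => (p.1, t)) ((0:ℝ), (1:ℝ)) p.2 :=
    (hasDerivAt_const p.2 p.1).prodMk (hasDerivAt_id p.2)
  have h1 : HasDerivAt (fun t : ℝ => fderiv ℝ F (p.1, t))
      (fderiv ℝ (fderiv ℝ F) p ((0:ℝ),(1:ℝ))) p.2 := hd.comp_hasDerivAt p.2 hc
  have := (ContinuousLinearMap.apply ℝ ℂ v).hasFDerivAt.comp_hasDerivAt p.2 h1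
  simpa [Function.comp_def] using this

lemma D1D2_comm {F : ℝ × ℝ → ℂ} (hF : ContDiff ℝ (⊤ : ℕ∞) F) : D1 (D2 F) = D2 (D1 F) := by
  funext p
  have h12 : D1 (D2 F) p = fderiv ℝ (fderiv ℝ F) p ((1:ℝ),(0:ℝ)) ((0:ℝ),(1:ℝ)) := by
    rw [show D1 (D2 F) p = deriv (fun s => D2 F (s, p.2)) p.1 from rfl]
    have : (fun s : ℝ => D2 F (s, p.2)) = fun s : ℝ => fderiv ℝ F (s, p.2) ((0:ℝ),(1:ℝ)) := by
      funext s; rw [D2_eq hF]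
    rw [this]
    exact (hasDerivAt_fderiv_line hF p _).deriv
  have h21 : D2 (D1 F) p = fderiv ℝ (fderiv ℝ F) p ((0:ℝ),(1:ℝ)) ((1:ℝ),(0:ℝ)) := by
    rw [show D2 (D1 F) p = deriv (fun t => D1 F (p.1, t)) p.2 from rfl]
    have : (fun t : ℝ => D1 F (p.1, t)) = fun t : ℝ => fderiv ℝ F (p.1, t) ((1:ℝ),(0:ℝ)) := by
      funext t; rw [D1_eq hF]
    rw [this]
    exact (hasDerivAt_fderiv_line2 hF p _).deriv
  rw [h12, h21, hF.contDiffAt.isSymmSndFDerivAt (by simp only [minSmoothness_of_isRCLikeNormedField]; exact WithTop.coe_le_coe.mpr le_top) _ _]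

lemma D1_iter_smooth {F : ℝ × ℝ → ℂ} (hF : ContDiff ℝ (⊤ : ℕ∞) F) (n : ℕ) :
    ContDiff ℝ (⊤ : ℕ∞) (D1^[n] F) := by
  induction n with
  | zero => exact hF
  | succ n ih => rw [Function.iterate_succ_apply']; exact D1_smooth ih

lemma D2_iter_smooth {F : ℝ × ℝ → ℂ} (hF : ContDiff ℝ (⊤ : ℕ∞) F) (n : ℕ) :
    ContDiff ℝ (⊤ : ℕ∞) (D2^[n] F) := by
  induction n with
  | zero => exact hF
  | succ n ih => rw [Function.iterate_succ_apply']; exact D2_smooth ih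

lemma slice1_smooth {F : ℝ × ℝ → ℂ} (hF : ContDiff ℝ (⊤ : ℕ∞) F) (y : ℝ) :
    ContDiff ℝ (⊤ : ℕ∞) (fun s => F (s, y)) :=
  hF.comp (contDiff_id.prodMk contDiff_const)

lemma slice2_smooth {F : ℝ × ℝ → ℂ} (hF : ContDiff ℝ (⊤ : ℕ∞) F) (x : ℝ) :
    ContDiff ℝ (⊤ : ℕ∞) (fun t => F (x, t)) :=
  hF.comp (contDiff_const.prodMk contDiff_id)

lemma P1_eq {F : ℝ × ℝ → ℂ} (n : ℕ) (x y : ℝ) :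
    iteratedDeriv n (fun s => F (s, y)) x = (D1^[n] F) (x, y) := by
  induction n generalizing F with
  | zero => rfl
  | succ n ih =>
      rw [iteratedDeriv_succ', Function.iterate_succ_apply]
      have : deriv (fun s => F (s, y)) = fun s => D1 F (s, y) := rfl
      rw [this]
      exact ih

lemma P2_eq {F : ℝ × ℝ → ℂ} (n : ℕ) (x y : ℝ) :
    iteratedDeriv n (fun t => F (x, t)) y = (D2^[n] F) (x, y) := by
  induction n generalizing F with
  | zero => rfl
  | succ n ih =>
      rw [iteratedDeriv_succ', Function.iterate_succ_apply]
      have : deriv (fun t => F (x, t)) = fun t => D2 F (x, t) := rfl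
      rw [this]
      exact ih

lemma D2iter_D1_comm {F : ℝ × ℝ → ℂ} (hF : ContDiff ℝ (⊤ : ℕ∞) F) (b : ℕ) :
    D2^[b] (D1 F) = D1 (D2^[b] F) := by
  induction b generalizing F with
  | zero => rfl
  | succ b ih =>
      rw [Function.iterate_succ_apply, Function.iterate_succ_apply,
        ← D1D2_comm hF, ih (D2_smooth hF)]

lemma D2iter_D1iter_comm {F : ℝ × ℝ → ℂ} (hF : ContDiff ℝ (⊤ : ℕ∞) F) (i b : ℕ) :
    D2^[b] (D1^[i] F) = D1^[i] (D2^[b] F) := by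
  induction i generalizing F with
  | zero => rfl
  | succ i ih =>
      rw [Function.iterate_succ_apply, Function.iterate_succ_apply,
        ih (D1_smooth hF), D2iter_D1_comm hF]
lemma claim2 {f : ℝ × ℝ → ℂ} (hf : ContDiff ℝ (⊤ : ℕ∞) f) (i m : ℕ) (y : ℝ) :
    iteratedDeriv m (fun t => (((i.factorial : ℕ) : ℂ))⁻¹ * (D1^[i] f) (0, t)) y
      = (((i.factorial : ℕ) : ℂ))⁻¹ * (D1^[i] (D2^[m] f)) (0, y) := by
  rw [itd_cmul (slice2_smooth (D1_iter_smooth hf i) 0), P2_eq,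
    D2iter_D1iter_comm hf]

theorem stmt14 (a b : ℕ) (f : ℝ × ℝ → ℂ) (hf : ContDiff ℝ (⊤ : ℕ∞) f)
    (hzero : ∀ x y : ℝ,
      iteratedDeriv a (fun s => iteratedDeriv b (fun t => f (s, t)) y) x = 0) :
    ∃ g : Fin a → ℝ → ℂ, ∃ h : Fin b → ℝ → ℂ,
      (∀ j, ContDiff ℝ (⊤ : ℕ∞) (g j)) ∧ (∀ j, ContDiff ℝ (⊤ : ℕ∞) (h j)) ∧
      ∀ x y : ℝ, f (x, y) =
        (∑ j : Fin a, g j y * (x : ℂ) ^ (j : ℕ)) +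
          ∑ j : Fin b, h j x * (y : ℂ) ^ (j : ℕ) := by
  set G : ℝ × ℝ → ℂ := D2^[b] f with hG
  have hGsm : ContDiff ℝ (⊤ : ℕ∞) G := D2_iter_smooth hf b
  have hzero' : ∀ y x : ℝ, iteratedDeriv a (fun s => G (s, y)) x = 0 := by
    intro y x
    have : (fun s => iteratedDeriv b (fun t => f (s, t)) y) = fun s => G (s, y) := by
      funext s; exact P2_eq b s y
    rw [← this]; exact hzero x y
  -- Taylor expansion of G in the first variable
  have key1 : ∀ x y : ℝ, G (x, y) = ∑ i ∈ Finset.range a,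
      (iteratedDeriv i (fun s => G (s, y)) 0 / ((i.factorial : ℕ) : ℂ)) * (x:ℂ) ^ i := by
    intro x y
    exact poly_of_itd_zero a (fun s => G (s, y)) (slice1_smooth hGsm y) (hzero' y) x
  set gR : ℕ → ℝ → ℂ := fun i y => (((i.factorial : ℕ) : ℂ))⁻¹ * (D1^[i] f) (0, y) with hgR
  have hgRsm : ∀ i, ContDiff ℝ (⊤ : ℕ∞) (gR i) := fun i =>
    contDiff_const.mul (slice2_smooth (D1_iter_smooth hf i) 0)
  -- the remainder in the second variable
  have hSx : ∀ x : ℝ, ContDiff ℝ (⊤ : ℕ∞) (fun t => ∑ i ∈ Finset.range a, (x:ℂ) ^ i * gR i t) :=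
    fun x => ContDiff.sum fun i _ => contDiff_const.mul (hgRsm i)
  have hu : ∀ x : ℝ, ContDiff ℝ (⊤ : ℕ∞)
      (fun t => f (x, t) - ∑ i ∈ Finset.range a, (x:ℂ) ^ i * gR i t) :=
    fun x => (slice2_smooth hf x).sub (hSx x)
  have keyu : ∀ (m : ℕ) (x y : ℝ),
      iteratedDeriv m (fun t => f (x, t) - ∑ i ∈ Finset.range a, (x:ℂ) ^ i * gR i t) y
        = (D2^[m] f) (x, y) - ∑ i ∈ Finset.range a,
            (x:ℂ) ^ i * ((((i.factorial : ℕ) : ℂ))⁻¹ * (D1^[i] (D2^[m] f)) (0, y)) := by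
    intro m x y
    rw [itd_sub (slice2_smooth hf x) (hSx x),
      itd_sum _ _ (fun i _ => contDiff_const.mul (hgRsm i)), P2_eq]
    congr 1
    refine Finset.sum_congr rfl fun i _ => ?_
    rw [itd_cmul (hgRsm i), claim2 hf]
  have keyzero : ∀ x y : ℝ,
      iteratedDeriv b (fun t => f (x, t) - ∑ i ∈ Finset.range a, (x:ℂ) ^ i * gR i t) y = 0 := by
    intro x y
    rw [keyu b x y, ← hG, key1 x y, sub_eq_zero]
    refine Finset.sum_congr rfl fun i _ => ?_
    rw [P1_eq]
    field_simp
  -- main decomposition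
  refine ⟨fun i => gR i, fun j x => ((D2^[(j:ℕ)] f) (x, 0) - ∑ i ∈ Finset.range a,
      (x:ℂ) ^ i * ((((i.factorial : ℕ) : ℂ))⁻¹ * (D1^[i] (D2^[(j:ℕ)] f)) (0, 0)))
        / (((j:ℕ).factorial : ℂ)), fun i => hgRsm i, ?_, ?_⟩
  · intro j
    refine ContDiff.div_const (ContDiff.sub ?_ ?_) _
    · exact slice1_smooth (D2_iter_smooth hf (j:ℕ)) 0
    · refine ContDiff.sum fun i _ => ContDiff.mul ?_ contDiff_const
      exact (Complex.ofRealCLM.contDiff.of_le le_top).pow i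
  · intro x y
    have hpoly := poly_of_itd_zero b _ (hu x) (keyzero x) y
    have hival : ∀ j : ℕ,
        iteratedDeriv j (fun t => f (x, t) - ∑ i ∈ Finset.range a, (x:ℂ) ^ i * gR i t) 0
          = (D2^[j] f) (x, 0) - ∑ i ∈ Finset.range a,
              (x:ℂ) ^ i * ((((i.factorial : ℕ) : ℂ))⁻¹ * (D1^[i] (D2^[j] f)) (0, 0)) :=
      fun j => keyu j x 0
    have hfxy : f (x, y) = (∑ i ∈ Finset.range a, (x:ℂ) ^ i * gR i y)
        + ∑ j ∈ Finset.range b,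
            (((D2^[j] f) (x, 0) - ∑ i ∈ Finset.range a,
              (x:ℂ) ^ i * ((((i.factorial : ℕ) : ℂ))⁻¹ * (D1^[i] (D2^[j] f)) (0, 0)))
                / ((j.factorial : ℕ) : ℂ)) * (y:ℂ) ^ j := by
      have := hpoly
      simp only [hival] at this
      linear_combination this
    rw [hfxy]
    congr 1
    · rw [Fin.sum_univ_eq_sum_range (fun i => gR i y * (x:ℂ) ^ i) a]
      exact Finset.sum_congr rfl fun i _ => by ring
    · rw [Fin.sum_univ_eq_sum_range (fun j => ((D2^[j] f) (x, 0) - ∑ i ∈ Finset.range a,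
        (x:ℂ) ^ i * ((((i.factorial : ℕ) : ℂ))⁻¹ * (D1^[i] (D2^[j] f)) (0, 0)))
          / ((j.factorial : ℕ) : ℂ) * (y:ℂ) ^ j) b]
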